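/- arXiv:2406.02068 — 3 statements merged into one kernel-verified Lean document; each statement's English description precedes it below -/
import Mathlib

section
/- Let σ be a reflection on V as above and σ∨ its dual reflection on V*. Suppose μ, ν are finite measures on compact subsets of V and V* respectively, invariant under σ and σ∨. If γ is a (σ, σ∨)-invariant optimal transport plan from μ to ν for the cost c(m,n) = -⟨m,n⟩, then every point (m,n) in the support of γ satisfies ⟨m, α∨⟩·⟨α, n⟩ ≥ 0. -/
/-!
Suppose `F(m, n) = ⟨m, α∨⟩⟨α, n⟩` is negative at a point of the support of `γ`. Since `σ` and
`σ∨` flip the signs of the two factors, `F` is `(σ, σ∨)`-invariant, so `B = {F < 0}` is an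
invariant open set of positive `γ`-measure. Replace `γ` on `B` by the average of its images under
`id × σ∨` and `σ × id`: by invariance of `γ|_B` the marginals do not change, while each of the two
maps adds exactly `F` to the cost `-⟨m, n⟩`. The new plan therefore costs `∫_B F dγ < 0` less,
contradicting optimality.
-/

open MeasureTheory
open scoped ENNReal

theorem inv_two_smul_add_inv_two_smul {M : Type*} [AddCommMonoid M] [Module ℝ≥0∞ M] (x : M) :
    (2⁻¹ : ℝ≥0∞) • x + (2⁻¹ : ℝ≥0∞) • x = x := by
  rw [← add_smul, ENNReal.inv_two_add_inv_two, one_smul]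

section Reflection

variable {ι R : Type*} [Fintype ι] [CommRing R] {α αv : ι → R}

theorem sub_smul_dotProduct_eq (m n : ι → R) :
    (m - (m ⬝ᵥ αv) • α) ⬝ᵥ n = m ⬝ᵥ n - (m ⬝ᵥ αv) * (α ⬝ᵥ n) := by
  rw [sub_dotProduct, smul_dotProduct, smul_eq_mul]

theorem dotProduct_sub_smul_eq (m n : ι → R) :
    m ⬝ᵥ (n - (α ⬝ᵥ n) • αv) = m ⬝ᵥ n - (m ⬝ᵥ αv) * (α ⬝ᵥ n) := by
  rw [dotProduct_sub, dotProduct_smul, smul_eq_mul, mul_comm]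

theorem sub_smul_dotProduct_coroot (h : α ⬝ᵥ αv = 2) (m : ι → R) :
    (m - (m ⬝ᵥ αv) • α) ⬝ᵥ αv = -(m ⬝ᵥ αv) := by
  rw [sub_smul_dotProduct_eq, h]; ring

theorem root_dotProduct_sub_smul (h : α ⬝ᵥ αv = 2) (n : ι → R) :
    α ⬝ᵥ (n - (α ⬝ᵥ n) • αv) = -(α ⬝ᵥ n) := by
  rw [dotProduct_sub_smul_eq, h]; ring

end Reflection

namespace MeasureTheory.Measure

variable {X Y X' Y' : Type*} [MeasurableSpace X] [MeasurableSpace Y] [MeasurableSpace X']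
  [MeasurableSpace Y']

theorem fst_smul (r : ℝ≥0∞) (ρ : Measure (X × Y)) : (r • ρ).fst = r • ρ.fst :=
  Measure.map_smul r ρ Prod.fst

theorem snd_smul (r : ℝ≥0∞) (ρ : Measure (X × Y)) : (r • ρ).snd = r • ρ.snd :=
  Measure.map_smul r ρ Prod.snd

theorem fst_map_prodMap (ρ : Measure (X × Y)) {f : X → X'} {g : Y → Y'} (hf : Measurable f)
    (hg : Measurable g) : (ρ.map (Prod.map f g)).fst = ρ.fst.map f := by
  rw [Measure.fst, Measure.fst, map_map measurable_fst (hf.prodMap hg),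
    map_map hf measurable_fst]
  rfl

theorem snd_map_prodMap (ρ : Measure (X × Y)) {f : X → X'} {g : Y → Y'} (hf : Measurable f)
    (hg : Measurable g) : (ρ.map (Prod.map f g)).snd = ρ.snd.map g := by
  rw [Measure.snd, Measure.snd, map_map measurable_snd (hf.prodMap hg),
    map_map hg measurable_snd]
  rfl

theorem map_restrict_of_preimage_eq {Z : Type*} [MeasurableSpace Z] {T : Z → Z} {γ : Measure Z}
    (hT : Measurable T) (hγ : γ.map T = γ) {B : Set Z} (hB : MeasurableSet B)
    (hfgB : T ⁻¹' B = B) : (γ.restrict B).map T = γ.restrict B := by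
  conv_lhs => rw [← hfgB]
  rw [← restrict_map hT hB, hγ]

theorem measure_compl_prod_eq_zero {ρ : Measure (X × Y)} {K : Set X} {L : Set Y}
    (hK : MeasurableSet K) (hL : MeasurableSet L)
    (hρK : ρ.fst Kᶜ = 0) (hρL : ρ.snd Lᶜ = 0) : ρ (K ×ˢ L)ᶜ = 0 := by
  rw [fst_apply hK.compl] at hρK
  rw [snd_apply hL.compl] at hρL
  rw [Set.compl_prod_eq_union, Set.prod_univ, Set.univ_prod]
  exact measure_union_null hρK hρL

end MeasureTheory.Measure

namespace MeasureTheory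

variable {Z : Type*} [MeasurableSpace Z] {μ β : Measure Z} {φ : Z → Z} {c F : Z → ℝ}

theorem integrable_map_of_comp_eq_add (hφ : Measurable φ) (hc : Measurable c)
    (hcφ : ∀ z, c (φ z) = c z + F z) (hci : Integrable c β) (hFi : Integrable F β) :
    Integrable c (β.map φ) := by
  rw [integrable_map_measure hc.aestronglyMeasurable hφ.aemeasurable,
    show c ∘ φ = c + F from funext hcφ]
  exact hci.add hFi

theorem integral_map_of_comp_eq_add (hφ : Measurable φ) (hc : Measurable c)
    (hcφ : ∀ z, c (φ z) = c z + F z) (hci : Integrable c β) (hFi : Integrable F β) :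
    ∫ z, c z ∂(β.map φ) = ∫ z, c z ∂β + ∫ z, F z ∂β := by
  rw [integral_map hφ.aemeasurable hc.aestronglyMeasurable, ← integral_add hci hFi]
  simp only [hcφ]

theorem _root_.Continuous.integrable_of_measure_compl_eq_zero [TopologicalSpace Z] [T2Space Z]
    [OpensMeasurableSpace Z] [IsFiniteMeasure μ] {E : Type*} [NormedAddCommGroup E]
    {f : Z → E} (hf : Continuous f) {K : Set Z} (hK : IsCompact K) (hμK : μ Kᶜ = 0) :
    Integrable f μ :=
  (hf.continuousOn.integrableOn_compact hK).integrable_of_ae_notMem_eq_zero <| by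
    filter_upwards [mem_ae_iff.2 hμK] with x hx hx' using absurd hx hx'

theorem setIntegral_neg_of_forall_neg {f : Z → ℝ} {s : Set Z} (hs : MeasurableSet s)
    (hfi : IntegrableOn f s μ) (hf : ∀ x ∈ s, f x < 0) (hμs : 0 < μ s) :
    ∫ x in s, f x ∂μ < 0 := by
  have hpos : 0 < ∫ x in s, (-f) x ∂μ := by
    rw [setIntegral_pos_iff_support_of_nonneg_ae _ hfi.neg]
    · have hs_supp : s ⊆ Function.support f := fun x hx => (hf x hx).ne
      rwa [Function.support_neg, Set.inter_eq_right.2 hs_supp]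
    · filter_upwards [ae_restrict_mem hs] with x hx using neg_nonneg.2 (hf x hx).le
  simp only [Pi.neg_apply, integral_neg] at hpos
  linarith

end MeasureTheory

namespace MeasureTheory.Measure

variable {X Y : Type*} [MeasurableSpace X] [MeasurableSpace Y] {f : X → X} {g : Y → Y}

noncomputable def partialMapAverage (f : X → X) (g : Y → Y) (β : Measure (X × Y)) :
    Measure (X × Y) :=
  (2⁻¹ : ℝ≥0∞) • β.map (Prod.map id g) + (2⁻¹ : ℝ≥0∞) • β.map (Prod.map f id)

variable {β : Measure (X × Y)}

theorem fst_partialMapAverage (hf : Measurable f) (hg : Measurable g)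
    (hβ : β.map (Prod.map f g) = β) : (partialMapAverage f g β).fst = β.fst := by
  have hfst : β.fst.map f = β.fst := by rw [← fst_map_prodMap β hf hg, hβ]
  rw [partialMapAverage, fst_add, fst_smul, fst_smul, fst_map_prodMap β measurable_id hg,
    fst_map_prodMap β hf measurable_id, map_id, hfst, inv_two_smul_add_inv_two_smul]

theorem snd_partialMapAverage (hf : Measurable f) (hg : Measurable g)
    (hβ : β.map (Prod.map f g) = β) : (partialMapAverage f g β).snd = β.snd := by
  have hsnd : β.snd.map g = β.snd := by rw [← snd_map_prodMap β hf hg, hβ]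
  rw [partialMapAverage, snd_add, snd_smul, snd_smul, snd_map_prodMap β measurable_id hg,
    snd_map_prodMap β hf measurable_id, map_id, hsnd, inv_two_smul_add_inv_two_smul]

variable {c F : X × Y → ℝ}

theorem integrable_partialMapAverage (hf : Measurable f) (hg : Measurable g) (hc : Measurable c)
    (hcg : ∀ q, c (q.1, g q.2) = c q + F q) (hcf : ∀ q, c (f q.1, q.2) = c q + F q)
    (hci : Integrable c β) (hFi : Integrable F β) :
    Integrable c (partialMapAverage f g β) :=
  ((integrable_map_of_comp_eq_add (measurable_id.prodMap hg) hc hcg hci hFi).smul_measure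
    (by simp)).add_measure
    ((integrable_map_of_comp_eq_add (hf.prodMap measurable_id) hc hcf hci hFi).smul_measure
    (by simp))

theorem integral_partialMapAverage (hf : Measurable f) (hg : Measurable g) (hc : Measurable c)
    (hcg : ∀ q, c (q.1, g q.2) = c q + F q) (hcf : ∀ q, c (f q.1, q.2) = c q + F q)
    (hci : Integrable c β) (hFi : Integrable F β) :
    ∫ q, c q ∂(partialMapAverage f g β) = ∫ q, c q ∂β + ∫ q, F q ∂β := by
  have hmap_g := integrable_map_of_comp_eq_add (measurable_id.prodMap hg) hc hcg hci hFi
  have hmap_f := integrable_map_of_comp_eq_add (hf.prodMap measurable_id) hc hcf hci hFi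
  rw [partialMapAverage, integral_add_measure (hmap_g.smul_measure (by simp))
    (hmap_f.smul_measure (by simp)), integral_smul_measure, integral_smul_measure,
    integral_map_of_comp_eq_add (measurable_id.prodMap hg) hc hcg hci hFi,
    integral_map_of_comp_eq_add (hf.prodMap measurable_id) hc hcf hci hFi]
  simp only [ENNReal.toReal_inv, ENNReal.toReal_ofNat, smul_eq_mul]
  ring

end MeasureTheory.Measure

namespace MeasureTheory

variable {X Y : Type*} [MeasurableSpace X] [MeasurableSpace Y] {f : X → X} {g : Y → Y}
  {c F : X × Y → ℝ}

theorem exists_coupling_integral_eq_add_setIntegral (hf : Measurable f) (hg : Measurable g)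
    (hc : Measurable c) (hcg : ∀ q, c (q.1, g q.2) = c q + F q)
    (hcf : ∀ q, c (f q.1, q.2) = c q + F q) {γ : Measure (X × Y)}
    (hγ : γ.map (Prod.map f g) = γ) (hci : Integrable c γ) (hFi : Integrable F γ)
    {B : Set (X × Y)} (hB : MeasurableSet B) (hfgB : Prod.map f g ⁻¹' B = B) :
    ∃ γ' : Measure (X × Y), γ'.fst = γ.fst ∧ γ'.snd = γ.snd ∧
      ∫ q, c q ∂γ' = ∫ q, c q ∂γ + ∫ q in B, F q ∂γ := by
  have hβ : (γ.restrict B).map (Prod.map f g) = γ.restrict B :=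
    Measure.map_restrict_of_preimage_eq (hf.prodMap hg) hγ hB hfgB
  have hsplit : γ.restrict Bᶜ + γ.restrict B = γ := by
    rw [add_comm]; exact Measure.restrict_add_restrict_compl hB
  refine ⟨γ.restrict Bᶜ + (γ.restrict B).partialMapAverage f g, ?_, ?_, ?_⟩
  · rw [Measure.fst_add, Measure.fst_partialMapAverage hf hg hβ, ← Measure.fst_add, hsplit]
  · rw [Measure.snd_add, Measure.snd_partialMapAverage hf hg hβ, ← Measure.snd_add, hsplit]
  · rw [integral_add_measure hci.restrict (Measure.integrable_partialMapAverage hf hg hc hcg hcf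
      hci.restrict hFi.restrict), Measure.integral_partialMapAverage hf hg hc hcg hcf
      hci.restrict hFi.restrict, ← add_assoc, add_comm (∫ q in Bᶜ, c q ∂γ),
      integral_add_compl hB hci]

end MeasureTheory

theorem stmt1_general (d : ℕ)
    (p : (Fin d → ℝ) → (Fin d → ℝ) → ℝ) (hp : ∀ m n, p m n = ∑ i, m i * n i)
    (α αv : Fin d → ℝ) (hα : p α αv = 2)
    (σ σv : (Fin d → ℝ) → (Fin d → ℝ))
    (hσ : ∀ m, σ m = m - p m αv • α)
    (hσv : ∀ n, σv n = n - p α n • αv)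
    (μ ν : Measure (Fin d → ℝ)) [IsFiniteMeasure μ] [IsFiniteMeasure ν]
    (hμc : ∃ K, IsCompact K ∧ μ Kᶜ = 0) (hνc : ∃ K, IsCompact K ∧ ν Kᶜ = 0)
    (c : (Fin d → ℝ) → (Fin d → ℝ) → ℝ) (hc : ∀ m n, c m n = - p m n)
    (γ : Measure ((Fin d → ℝ) × (Fin d → ℝ)))
    (hγ1 : γ.fst = μ) (hγ2 : γ.snd = ν)
    (hγinv : Measure.map (Prod.map σ σv) γ = γ)
    (hopt : ∀ γ' : Measure ((Fin d → ℝ) × (Fin d → ℝ)),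
      γ'.fst = μ → γ'.snd = ν →
      ∫ q, c q.1 q.2 ∂γ ≤ ∫ q, c q.1 q.2 ∂γ')
    (m n : Fin d → ℝ)
    (hsupp : ∀ U : Set ((Fin d → ℝ) × (Fin d → ℝ)), IsOpen U → (m, n) ∈ U → 0 < γ U) :
    0 ≤ p m αv * p α n := by
  obtain rfl : p = (· ⬝ᵥ ·) := funext₂ hp
  obtain rfl : c = fun m n => -(m ⬝ᵥ n) := funext₂ hc
  by_contra! hneg
  set F : (Fin d → ℝ) × (Fin d → ℝ) → ℝ := fun q => (q.1 ⬝ᵥ αv) * (α ⬝ᵥ q.2)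
  set B := F ⁻¹' Set.Iio 0
  have hB : IsOpen B := isOpen_Iio.preimage (by fun_prop)
  have hσc : Continuous σ := by rw [show σ = _ from funext hσ]; fun_prop
  have hσvc : Continuous σv := by rw [show σv = _ from funext hσv]; fun_prop
  have hfgB : Prod.map σ σv ⁻¹' B = B := by
    ext q
    simp [B, F, hσ, hσv, sub_smul_dotProduct_coroot hα, root_dotProduct_sub_smul hα]
  have : IsFiniteMeasure γ := ⟨by rw [← Measure.fst_univ, hγ1]; exact measure_lt_top μ _⟩
  obtain ⟨K, hK, hμK⟩ := hμc
  obtain ⟨L, hL, hνL⟩ := hνc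
  have hγKL : γ (K ×ˢ L)ᶜ = 0 := Measure.measure_compl_prod_eq_zero hK.measurableSet
    hL.measurableSet (hγ1 ▸ hμK) (hγ2 ▸ hνL)
  have hint : ∀ f : (Fin d → ℝ) × (Fin d → ℝ) → ℝ, Continuous f → Integrable f γ :=
    fun f hf => hf.integrable_of_measure_compl_eq_zero (hK.prod hL) hγKL
  obtain ⟨γ', hγ'1, hγ'2, hcost⟩ := exists_coupling_integral_eq_add_setIntegral
    hσc.measurable hσvc.measurable (by fun_prop) (c := fun q => -(q.1 ⬝ᵥ q.2)) (F := F)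
    (fun q => by simp only [hσv, dotProduct_sub_smul_eq, F]; ring)
    (fun q => by simp only [hσ, sub_smul_dotProduct_eq, F]; ring) hγinv
    (hint _ (by fun_prop)) (hint F (by fun_prop)) hB.measurableSet hfgB
  have hFB : ∫ q in B, F q ∂γ < 0 := setIntegral_neg_of_forall_neg hB.measurableSet
    (hint F (by fun_prop)).integrableOn (fun _ hq => hq) (hsupp B hB hneg)
  linarith [hopt γ' (hγ'1.trans hγ1) (hγ'2.trans hγ2)]

/-- Identify ℝ^d with its dual via the standard pairing. Let σ, σ∨ be
dual reflections, μ, ν finite measures supported on compact sets, invariant under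
σ and σ∨ respectively, and γ a (σ,σ∨)-invariant optimal transport plan from μ to ν
for the cost c(m,n) = −⟨m,n⟩. Then any point (m,n) of the support of γ satisfies
⟨m,α∨⟩·⟨α,n⟩ ≥ 0. -/
theorem stmt1 (d : ℕ)
    (p : (Fin d → ℝ) → (Fin d → ℝ) → ℝ) (hp : ∀ m n, p m n = ∑ i, m i * n i)
    (α αv : Fin d → ℝ) (hα : p α αv = 2)
    (σ σv : (Fin d → ℝ) → (Fin d → ℝ))
    (hσ : ∀ m, σ m = m - p m αv • α)
    (hσv : ∀ n, σv n = n - p α n • αv)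
    (μ ν : Measure (Fin d → ℝ)) [IsFiniteMeasure μ] [IsFiniteMeasure ν]
    (hμc : ∃ K, IsCompact K ∧ μ Kᶜ = 0) (hνc : ∃ K, IsCompact K ∧ ν Kᶜ = 0)
    (hμinv : Measure.map σ μ = μ) (hνinv : Measure.map σv ν = ν)
    (c : (Fin d → ℝ) → (Fin d → ℝ) → ℝ) (hc : ∀ m n, c m n = - p m n)
    (γ : Measure ((Fin d → ℝ) × (Fin d → ℝ)))
    (hγ1 : γ.fst = μ) (hγ2 : γ.snd = ν)
    (hγinv : Measure.map (Prod.map σ σv) γ = γ)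
    (hopt : ∀ γ' : Measure ((Fin d → ℝ) × (Fin d → ℝ)),
      γ'.fst = μ → γ'.snd = ν →
      ∫ q, c q.1 q.2 ∂γ ≤ ∫ q, c q.1 q.2 ∂γ')
    (m n : Fin d → ℝ)
    (hsupp : ∀ U : Set ((Fin d → ℝ) × (Fin d → ℝ)), IsOpen U → (m, n) ∈ U → 0 < γ U) :
    0 ≤ p m αv * p α n :=
  stmt1_general d p hp α αv hα σ σv hσ hσv μ ν hμc hνc c hc γ hγ1 hγ2 hγinv hopt m n hsupp
end

section
/- Let γ be a coupling of two measures whose support is c-cyclically monotone for the cost c(m,n) = -⟨m,n⟩, and suppose (m,n) and (σ(m), σ∨(n)) are both in the support of γ, where σ, σ∨ are dual reflections associated to (α, α∨) with ⟨α,α∨⟩ = 2. Then ⟨m, α∨⟩·⟨α, n⟩ ≥ 0. -/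
/-! For the cost `c(m, n) = -⟨m, n⟩`, monotonicity of a pair of points `(m, n), (m', n')` says
exactly `⟨m' - m, n' - n⟩ ≥ 0`. For the pair `(m, n), (σ m, σ∨ n)` the increments are
`-⟨m, α∨⟩ α` and `-⟨α, n⟩ α∨`, whose pairing is `2 ⟨m, α∨⟩ ⟨α, n⟩`. -/

section

variable {R M : Type*} [CommRing R] [AddCommGroup M] [Module R M]

theorem Module.Dual.sub_apply_sub_nonneg [PartialOrder R] [IsOrderedAddMonoid R]
    {m m' : M} {n n' : Module.Dual R M} (h : -n m + -n' m' ≤ -n' m + -n m') :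
    0 ≤ (n' - n) (m' - m) := by
  have hexpand : (n' - n) (m' - m) = (-n' m + -n m') - (-n m + -n' m') := by
    simp only [map_sub, LinearMap.sub_apply]
    abel
  exact hexpand ▸ sub_nonneg.mpr h

theorem Module.Dual.reflection_sub_apply_reflection_sub {α : M} {αv : Module.Dual R M}
    (hα : αv α = 2) (m : M) (n : Module.Dual R M) :
    ((n - n α • αv) - n) ((m - αv m • α) - m) = 2 * (αv m * n α) := by
  simp only [sub_sub_cancel_left, map_neg, map_smul, LinearMap.neg_apply, LinearMap.smul_apply,
    hα, smul_eq_mul]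
  ring

end

theorem stmt2_general (V : Type*) [AddCommGroup V] [Module ℝ V]
    (α : V) (αv : Module.Dual ℝ V) (hα : αv α = 2)
    (σ : V → V) (hσ : ∀ m, σ m = m - αv m • α)
    (σv : Module.Dual ℝ V → Module.Dual ℝ V) (hσv : ∀ n, σv n = n - n α • αv)
    (c : V → Module.Dual ℝ V → ℝ) (hc : ∀ m n, c m n = - n m)
    (S : Set (V × Module.Dual ℝ V))
    (hmono : ∀ p ∈ S, ∀ q ∈ S, c p.1 p.2 + c q.1 q.2 ≤ c p.1 q.2 + c q.1 p.2)
    (m : V) (n : Module.Dual ℝ V)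
    (hmn : (m, n) ∈ S) (hmn' : (σ m, σv n) ∈ S) :
    0 ≤ αv m * n α := by
  have hpair := hmono _ hmn _ hmn'
  simp only [hc, hσ, hσv] at hpair
  have h := Module.Dual.sub_apply_sub_nonneg hpair
  rw [Module.Dual.reflection_sub_apply_reflection_sub hα] at h
  linarith

/-- If the support of a coupling is c-cyclically monotone for the cost
c(m,n) = -⟨m,n⟩, and both (m,n) and (σ(m),σ∨(n)) lie in the support, then
⟨m,α∨⟩·⟨α,n⟩ ≥ 0. -/
theorem stmt2 (V : Type*) [AddCommGroup V] [Module ℝ V] [FiniteDimensional ℝ V]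
    (α : V) (αv : Module.Dual ℝ V) (hα : αv α = 2)
    (σ : V → V) (hσ : ∀ m, σ m = m - αv m • α)
    (σv : Module.Dual ℝ V → Module.Dual ℝ V) (hσv : ∀ n, σv n = n - n α • αv)
    (c : V → Module.Dual ℝ V → ℝ) (hc : ∀ m n, c m n = - n m)
    (S : Set (V × Module.Dual ℝ V))
    (hmono : ∀ p ∈ S, ∀ q ∈ S, c p.1 p.2 + c q.1 q.2 ≤ c p.1 q.2 + c q.1 p.2)
    (m : V) (n : Module.Dual ℝ V)
    (hmn : (m, n) ∈ S) (hmn' : (σ m, σv n) ∈ S) :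
    0 ≤ αv m * n α :=
  stmt2_general V α αv hα σ hσ σv hσv c hc S hmono m n hmn hmn'
end

section
/- Let σ and σ∨ be dual reflections on V and V* associated to (α, α∨) with ⟨α,α∨⟩ = 2, and let T: V → V* be an optimal transport map between measures μ on V and ν on V* (for cost c(m,n) = −⟨m,n⟩) which is equivariant: T(σ(m)) = σ∨(T(m)) μ-a.e. Then for μ-a.e. m, the point m and its image T(m) lie on the same side of the reflecting hyperplanes: ⟨m,α∨⟩·⟨α,T(m)⟩ ≥ 0. -/
open MeasureTheory

/-!
The plan `γ = (id × T)_*μ` is invariant under `σ × σ∨`, and so is the set `B` of pairs `(m, n)`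
with `⟨m, α∨⟩⟨α, n⟩ < 0`. Replacing `n` by `σ∨ n` on `B` therefore gives a plan with the same
marginals, and it changes the cost `-⟨m, n⟩` by `⟨m, α∨⟩⟨α, n⟩ < 0`. Optimality of `γ` forces
`B` to be `γ`-null.
-/

section Coupling

variable {X Y : Type*}

def mapSndOn (B : Set (X × Y)) (h : Y → Y) [DecidablePred (· ∈ B)] : X × Y → X × Y :=
  B.piecewise (Prod.map id h) id

variable {B : Set (X × Y)} [DecidablePred (· ∈ B)] {h : Y → Y}

lemma fst_mapSndOn (q : X × Y) : (mapSndOn B h q).1 = q.1 := by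
  by_cases hq : q ∈ B <;> simp [mapSndOn, hq]

variable [MeasurableSpace X] [MeasurableSpace Y]

lemma measurable_mapSndOn (hB : MeasurableSet B) (hh : Measurable h) :
    Measurable (mapSndOn B h) :=
  (measurable_id.prodMap hh).piecewise hB measurable_id

lemma fst_map_mapSndOn (γ : Measure (X × Y)) (hB : MeasurableSet B) (hh : Measurable h) :
    (γ.map (mapSndOn B h)).fst = γ.fst := by
  rw [Measure.fst, Measure.map_map measurable_fst (measurable_mapSndOn hB hh)]
  exact congrArg (γ.map ·) (funext fst_mapSndOn)

lemma snd_map_mapSndOn {γ : Measure (X × Y)} {g : X → X} (hg : Measurable g) (hh : Measurable h)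
    (hγ : γ.map (Prod.map g h) = γ) (hB : MeasurableSet B) (hBinv : Prod.map g h ⁻¹' B = B) :
    (γ.map (mapSndOn B h)).snd = γ.snd := by
  ext s hs
  have hS : MeasurableSet (Prod.snd ⁻¹' s : Set (X × Y)) := measurable_snd hs
  have hswap : γ (Prod.map id h ⁻¹' (Prod.snd ⁻¹' s) ∩ B) = γ (Prod.snd ⁻¹' s ∩ B) := by
    conv_rhs =>
      rw [← hγ, Measure.map_apply (hg.prodMap hh) (hS.inter hB), Set.preimage_inter, hBinv]
    rfl
  rw [Measure.snd_apply hs, Measure.snd_apply hs,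
    Measure.map_apply (measurable_mapSndOn hB hh) hS, mapSndOn, Set.piecewise_preimage, Set.ite,
    Set.preimage_id, measure_union _ (hS.diff hB), hswap, measure_inter_add_sdiff _ hB]
  exact Set.disjoint_sdiff_right.mono_left Set.inter_subset_right

lemma map_prodMap_map_graph {μ : Measure X} {T : X → Y} {g : X → X} (hT : Measurable T)
    (hg : Measurable g) (hh : Measurable h) (hμ : μ.map g = μ)
    (hTg : ∀ᵐ x ∂μ, T (g x) = h (T x)) :
    (μ.map fun x => (x, T x)).map (Prod.map g h) = μ.map fun x => (x, T x) := by
  have hgraph : Measurable fun x => (x, T x) := measurable_id.prodMk hT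
  calc (μ.map fun x => (x, T x)).map (Prod.map g h)
      = μ.map fun x => (g x, h (T x)) := Measure.map_map (hg.prodMap hh) hgraph
    _ = μ.map ((fun x => (x, T x)) ∘ g) :=
        Measure.map_congr (by filter_upwards [hTg] with x hx; simp [hx])
    _ = μ.map fun x => (x, T x) := by rw [← Measure.map_map hgraph hg, hμ]

lemma Continuous.integrable_of_isCompact_marginals [TopologicalSpace X] [TopologicalSpace Y]
    [T2Space X] [T2Space Y] [OpensMeasurableSpace (X × Y)] {E : Type*} [NormedAddCommGroup E]
    {γ : Measure (X × Y)} [IsFiniteMeasure γ] {K₁ : Set X} {K₂ : Set Y} (hK₁ : IsCompact K₁)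
    (hK₂ : IsCompact K₂) (hγK₁ : γ.fst K₁ᶜ = 0) (hγK₂ : γ.snd K₂ᶜ = 0) {f : X × Y → E}
    (hf : Continuous f) : Integrable f γ := by
  have hK : ∀ᵐ q ∂γ, q ∈ K₁ ×ˢ K₂ :=
    (ae_of_ae_map measurable_fst.aemeasurable (mem_ae_iff.mpr hγK₁)).and
      (ae_of_ae_map measurable_snd.aemeasurable (mem_ae_iff.mpr hγK₂))
  rw [← Measure.restrict_eq_self_of_ae_mem hK]
  exact hf.continuousOn.integrableOn_compact (hK₁.prod hK₂)

end Coupling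

lemma comp_ae_eq_of_integral_le_integral_map {X : Type*} [MeasurableSpace X] {γ : Measure X}
    {c : X → ℝ} {Ψ : X → X} (hΨ : Measurable Ψ) (hc : Integrable c γ)
    (hcΨ : Integrable c (γ.map Ψ)) (hle : ∀ x, c (Ψ x) ≤ c x)
    (hopt : ∫ x, c x ∂γ ≤ ∫ x, c x ∂γ.map Ψ) : c ∘ Ψ =ᵐ[γ] c := by
  rw [integral_map hΨ.aemeasurable hcΨ.aestronglyMeasurable] at hopt
  rw [integrable_map_measure hcΨ.aestronglyMeasurable hΨ.aemeasurable] at hcΨ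
  exact (integral_eq_iff_of_ae_le hcΨ hc (.of_forall hle)).mp
    (le_antisymm (integral_mono hcΨ hc hle) hopt)

section DotReflection

variable {ι R : Type*} [Fintype ι] [CommRing R]

def dotReflection (α αv m : ι → R) : ι → R := m - (m ⬝ᵥ αv) • α

lemma dotReflection_dotProduct {α αv : ι → R} (hα : α ⬝ᵥ αv = 2) (m : ι → R) :
    dotReflection α αv m ⬝ᵥ αv = -(m ⬝ᵥ αv) := by
  simp only [dotReflection, sub_dotProduct, smul_dotProduct, hα, smul_eq_mul]; ring

lemma dotProduct_dotReflection (α αv m n : ι → R) :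
    m ⬝ᵥ dotReflection α αv n = m ⬝ᵥ n - (n ⬝ᵥ αv) * (m ⬝ᵥ α) := by
  simp only [dotReflection, dotProduct_sub, dotProduct_smul, smul_eq_mul]

@[fun_prop]
lemma continuous_dotReflection (α αv : ι → ℝ) : Continuous (dotReflection α αv) := by
  unfold dotReflection; fun_prop

def oppositeSides (α αv : ι → ℝ) : Set ((ι → ℝ) × (ι → ℝ)) :=
  {q | (q.1 ⬝ᵥ αv) * (α ⬝ᵥ q.2) < 0}

variable {α αv : ι → ℝ}

lemma measurableSet_oppositeSides : MeasurableSet (oppositeSides α αv) :=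
  measurableSet_lt (by fun_prop) measurable_const

lemma preimage_oppositeSides (hα : α ⬝ᵥ αv = 2) :
    Prod.map (dotReflection α αv) (dotReflection αv α) ⁻¹' oppositeSides α αv =
      oppositeSides α αv := by
  ext q
  have h₂ : α ⬝ᵥ dotReflection αv α q.2 = -(α ⬝ᵥ q.2) := by
    rw [dotProduct_comm, dotReflection_dotProduct (by rwa [dotProduct_comm]), dotProduct_comm]
  simp only [oppositeSides, Set.mem_preimage, Set.mem_ofPred_eq, Prod.map_fst, Prod.map_snd,
    dotReflection_dotProduct hα, h₂, neg_mul_neg]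

lemma neg_dotProduct_mapSndOn_oppositeSides [DecidablePred (· ∈ oppositeSides α αv)]
    (q : (ι → ℝ) × (ι → ℝ)) :
    -((mapSndOn (oppositeSides α αv) (dotReflection αv α) q).1 ⬝ᵥ
        (mapSndOn (oppositeSides α αv) (dotReflection αv α) q).2) =
      -(q.1 ⬝ᵥ q.2) + min ((q.1 ⬝ᵥ αv) * (α ⬝ᵥ q.2)) 0 := by
  by_cases hq : q ∈ oppositeSides α αv
  · rw [min_eq_left (le_of_lt hq)]
    simp only [mapSndOn, Set.piecewise_eq_of_mem _ _ _ hq, Prod.map, id, dotProduct_dotReflection,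
      dotProduct_comm q.2 α]
    ring
  · rw [min_eq_right (not_lt.mp hq), add_zero]
    simp only [mapSndOn, Set.piecewise_eq_of_notMem _ _ _ hq, id]

end DotReflection

theorem stmt15_general (d : ℕ)
    (p : (Fin d → ℝ) → (Fin d → ℝ) → ℝ) (hp : ∀ m n, p m n = ∑ i, m i * n i)
    (α αv : Fin d → ℝ) (hα : p α αv = 2)
    (σ σv : (Fin d → ℝ) → (Fin d → ℝ))
    (hσ : ∀ m, σ m = m - p m αv • α)
    (hσv : ∀ n, σv n = n - p α n • αv)
    (μ ν : Measure (Fin d → ℝ)) [IsFiniteMeasure μ]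
    (hμc : ∃ K, IsCompact K ∧ μ Kᶜ = 0) (hνc : ∃ K, IsCompact K ∧ ν Kᶜ = 0)
    (hμinv : Measure.map σ μ = μ)
    (c : (Fin d → ℝ) → (Fin d → ℝ) → ℝ) (hc : ∀ m n, c m n = - p m n)
    (T : (Fin d → ℝ) → (Fin d → ℝ)) (hT : Measurable T)
    (hpush : Measure.map T μ = ν)
    (hopt : ∀ γ' : Measure ((Fin d → ℝ) × (Fin d → ℝ)),
      γ'.fst = μ → γ'.snd = ν →
      ∫ q, c q.1 q.2 ∂(Measure.map (fun m => (m, T m)) μ) ≤ ∫ q, c q.1 q.2 ∂γ')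
    (hequiv : ∀ᵐ m ∂μ, T (σ m) = σv (T m)) :
    ∀ᵐ m ∂μ, 0 ≤ p m αv * p α (T m) := by
  classical
  obtain rfl : p = fun m n => m ⬝ᵥ n := funext₂ hp
  obtain rfl : c = fun m n => -(m ⬝ᵥ n) := funext₂ hc
  obtain rfl : σ = dotReflection α αv := funext hσ
  obtain rfl : σv = dotReflection αv α :=
    funext fun n => by rw [hσv, dotReflection, dotProduct_comm]
  obtain ⟨K₁, hK₁, hμK₁⟩ := hμc
  obtain ⟨K₂, hK₂, hνK₂⟩ := hνc
  set γ := μ.map fun m => (m, T m)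
  set Ψ := mapSndOn (oppositeSides α αv) (dotReflection αv α)
  have hΨ : Measurable Ψ := measurable_mapSndOn measurableSet_oppositeSides (by fun_prop)
  have hγfst : γ.fst = μ := by rw [Measure.fst_map_prodMk hT, Measure.map_id']
  have hγsnd : γ.snd = ν := by rw [Measure.snd_map_prodMk measurable_id', hpush]
  have hΨfst : (γ.map Ψ).fst = μ := by
    rw [fst_map_mapSndOn γ measurableSet_oppositeSides (by fun_prop), hγfst]
  have hΨsnd : (γ.map Ψ).snd = ν := by
    rw [snd_map_mapSndOn (by fun_prop) (by fun_prop)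
      (map_prodMap_map_graph hT (by fun_prop) (by fun_prop) hμinv hequiv)
      measurableSet_oppositeSides (preimage_oppositeSides hα), hγsnd]
  have hcont : Continuous fun q : (Fin d → ℝ) × (Fin d → ℝ) => -(q.1 ⬝ᵥ q.2) := by fun_prop
  have hcost := comp_ae_eq_of_integral_le_integral_map hΨ
    (hcont.integrable_of_isCompact_marginals hK₁ hK₂ (hγfst ▸ hμK₁) (hγsnd ▸ hνK₂))
    (hcont.integrable_of_isCompact_marginals hK₁ hK₂ (hΨfst ▸ hμK₁) (hΨsnd ▸ hνK₂))
    (fun q => by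
      simp only [Ψ, neg_dotProduct_mapSndOn_oppositeSides]
      exact add_le_of_nonpos_right (min_le_right _ _))
    (hopt _ hΨfst hΨsnd)
  have hsign : ∀ᵐ q ∂γ, 0 ≤ (q.1 ⬝ᵥ αv) * (α ⬝ᵥ q.2) := hcost.mono fun q hq => by
    simp only [Function.comp_apply, Ψ, neg_dotProduct_mapSndOn_oppositeSides] at hq
    exact min_eq_right_iff.mp (add_eq_left.mp hq)
  exact ae_of_ae_map (measurable_id.prodMk hT).aemeasurable hsign

/-- Identify ℝ^d with its dual via the standard pairing. If
T : V → V* is an optimal transport map between μ and ν for the cost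
c(m,n) = −⟨m,n⟩ (i.e. the induced plan (id × T)_*μ is optimal) which is
equivariant μ-a.e. for dual reflections σ, σ∨, then for μ-a.e. m, the points m
and T(m) lie on the same side of the reflecting hyperplanes:
⟨m,α∨⟩·⟨α,T(m)⟩ ≥ 0. -/
theorem stmt15 (d : ℕ)
    (p : (Fin d → ℝ) → (Fin d → ℝ) → ℝ) (hp : ∀ m n, p m n = ∑ i, m i * n i)
    (α αv : Fin d → ℝ) (hα : p α αv = 2)
    (σ σv : (Fin d → ℝ) → (Fin d → ℝ))
    (hσ : ∀ m, σ m = m - p m αv • α)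
    (hσv : ∀ n, σv n = n - p α n • αv)
    (μ ν : Measure (Fin d → ℝ)) [IsFiniteMeasure μ] [IsFiniteMeasure ν]
    (hμc : ∃ K, IsCompact K ∧ μ Kᶜ = 0) (hνc : ∃ K, IsCompact K ∧ ν Kᶜ = 0)
    (hμinv : Measure.map σ μ = μ) (hνinv : Measure.map σv ν = ν)
    (c : (Fin d → ℝ) → (Fin d → ℝ) → ℝ) (hc : ∀ m n, c m n = - p m n)
    (T : (Fin d → ℝ) → (Fin d → ℝ)) (hT : Measurable T)
    (hpush : Measure.map T μ = ν)
    (hopt : ∀ γ' : Measure ((Fin d → ℝ) × (Fin d → ℝ)),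
      γ'.fst = μ → γ'.snd = ν →
      ∫ q, c q.1 q.2 ∂(Measure.map (fun m => (m, T m)) μ) ≤ ∫ q, c q.1 q.2 ∂γ')
    (hequiv : ∀ᵐ m ∂μ, T (σ m) = σv (T m)) :
    ∀ᵐ m ∂μ, 0 ≤ p m αv * p α (T m) :=
  stmt15_general d p hp α αv hα σ σv hσ hσv μ ν hμc hνc hμinv c hc T hT hpush hopt hequiv
end
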